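/- Let Σ₁ = (1/4)diag(2,2,0,1,1), Σ₂ = (1/4)diag(2,0,2,1,1), Σ₃ = (1/4)diag(0,2,2,1,1). The orthonormal pair v₁ = (1/√2)(1,1,0,0,0)ᵀ, v₂ = (1/√2)(0,0,1,1,0)ᵀ satisfies min_e [v₁ᵀΣ_e v₁ + v₂ᵀΣ_e v₂] = 5/8, whereas any orthonormal pair whose first vector is (1/√3)(1,1,1,0,0)ᵀ achieves worst-case explained variance at most 7/12 < 5/8. Hence the sequential (greedy) construction of minPCA components is not optimal for the joint rank-2 minPCA problem. -/

import Mathlib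

/-!
Every quadratic form here is diagonal, so everything reduces to sums of squares. The greedy
direction gives `1/3` in each environment. For a unit `w` orthogonal to it,
`wᵀΣ_e w = (1 + a - 2 w_k²) / 4` with `a = w₀² + w₁² + w₂²` and `k` the coordinate that `Σ_e`
kills. Since `w₀ + w₁ + w₂ = 0`, two of these coordinates share a sign, and the third one `w_k`
then satisfies `a ≤ 2 w_k²`, which bounds that environment's variance by `1/3 + 1/4 = 7/12`.
-/

open Matrix

theorem dotProduct_smul_diagonal_mulVec_self {n R : Type*} [Fintype n] [DecidableEq n]
    [CommSemiring R] (c : R) (d v : n → R) :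
    v ⬝ᵥ (c • diagonal d) *ᵥ v = c * ∑ i, d i * v i ^ 2 := by
  simp only [smul_mulVec, mulVec_diagonal, dotProduct, Pi.smul_apply, smul_eq_mul, Finset.mul_sum]
  exact Finset.sum_congr rfl fun i _ => by ring

section LinearOrderedCommRing

variable {R : Type*} [CommRing R] [LinearOrder R] [IsStrictOrderedRing R]

theorem zero_le_mul_or_zero_le_mul_or_zero_le_mul (x y z : R) :
    0 ≤ y * z ∨ 0 ≤ x * z ∨ 0 ≤ x * y := by
  by_contra! h
  obtain ⟨hyz, hxz, hxy⟩ := h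
  nlinarith [mul_pos_of_neg_of_neg hxy hxz, mul_nonpos_of_nonneg_of_nonpos (sq_nonneg x) hyz.le]

theorem sq_add_sq_add_sq_le_two_mul_sq {x y z : R} (h : x + y + z = 0) (hyz : 0 ≤ y * z) :
    x ^ 2 + y ^ 2 + z ^ 2 ≤ 2 * x ^ 2 := by
  obtain rfl : x = -(y + z) := by linear_combination h
  nlinarith

theorem sq_add_sq_add_sq_le_two_mul_sq_of_add_eq_zero {x y z : R} (h : x + y + z = 0) :
    x ^ 2 + y ^ 2 + z ^ 2 ≤ 2 * x ^ 2 ∨ x ^ 2 + y ^ 2 + z ^ 2 ≤ 2 * y ^ 2 ∨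
      x ^ 2 + y ^ 2 + z ^ 2 ≤ 2 * z ^ 2 := by
  rcases zero_le_mul_or_zero_le_mul_or_zero_le_mul x y z with hyz | hxz | hxy
  · exact Or.inl (sq_add_sq_add_sq_le_two_mul_sq h hyz)
  · refine Or.inr (Or.inl ?_)
    linarith [sq_add_sq_add_sq_le_two_mul_sq (by linear_combination h : y + x + z = 0) hxz]
  · refine Or.inr (Or.inr ?_)
    linarith [sq_add_sq_add_sq_le_two_mul_sq (by linear_combination h : z + x + y = 0) hxy]

end LinearOrderedCommRing

/-- Sequential (greedy) minPCA is suboptimal for the joint rank-2 problem: the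
orthonormal pair `v₁ = (1/√2)(1,1,0,0,0)`, `v₂ = (1/√2)(0,0,1,1,0)` attains
worst-case explained variance `5/8`, while any orthonormal pair starting from the
greedy first direction `(1/√3)(1,1,1,0,0)` attains at most `7/12 < 5/8`. -/
theorem stmt15 :
    (![1 / Real.sqrt 2, 1 / Real.sqrt 2, 0, 0, 0] : Fin 5 → ℝ) ⬝ᵥ
        (![1 / Real.sqrt 2, 1 / Real.sqrt 2, 0, 0, 0] : Fin 5 → ℝ) = 1
    ∧ (![0, 0, 1 / Real.sqrt 2, 1 / Real.sqrt 2, 0] : Fin 5 → ℝ) ⬝ᵥ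
        (![0, 0, 1 / Real.sqrt 2, 1 / Real.sqrt 2, 0] : Fin 5 → ℝ) = 1
    ∧ (![1 / Real.sqrt 2, 1 / Real.sqrt 2, 0, 0, 0] : Fin 5 → ℝ) ⬝ᵥ
        (![0, 0, 1 / Real.sqrt 2, 1 / Real.sqrt 2, 0] : Fin 5 → ℝ) = 0
    ∧ min (min
          ((![1 / Real.sqrt 2, 1 / Real.sqrt 2, 0, 0, 0] : Fin 5 → ℝ) ⬝ᵥ
              (((1 : ℝ) / 4) • Matrix.diagonal ![(2 : ℝ), 2, 0, 1, 1]).mulVec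
                ![1 / Real.sqrt 2, 1 / Real.sqrt 2, 0, 0, 0]
            + (![0, 0, 1 / Real.sqrt 2, 1 / Real.sqrt 2, 0] : Fin 5 → ℝ) ⬝ᵥ
              (((1 : ℝ) / 4) • Matrix.diagonal ![(2 : ℝ), 2, 0, 1, 1]).mulVec
                ![0, 0, 1 / Real.sqrt 2, 1 / Real.sqrt 2, 0])
          ((![1 / Real.sqrt 2, 1 / Real.sqrt 2, 0, 0, 0] : Fin 5 → ℝ) ⬝ᵥ
              (((1 : ℝ) / 4) • Matrix.diagonal ![(2 : ℝ), 0, 2, 1, 1]).mulVec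
                ![1 / Real.sqrt 2, 1 / Real.sqrt 2, 0, 0, 0]
            + (![0, 0, 1 / Real.sqrt 2, 1 / Real.sqrt 2, 0] : Fin 5 → ℝ) ⬝ᵥ
              (((1 : ℝ) / 4) • Matrix.diagonal ![(2 : ℝ), 0, 2, 1, 1]).mulVec
                ![0, 0, 1 / Real.sqrt 2, 1 / Real.sqrt 2, 0]))
          ((![1 / Real.sqrt 2, 1 / Real.sqrt 2, 0, 0, 0] : Fin 5 → ℝ) ⬝ᵥ
              (((1 : ℝ) / 4) • Matrix.diagonal ![(0 : ℝ), 2, 2, 1, 1]).mulVec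
                ![1 / Real.sqrt 2, 1 / Real.sqrt 2, 0, 0, 0]
            + (![0, 0, 1 / Real.sqrt 2, 1 / Real.sqrt 2, 0] : Fin 5 → ℝ) ⬝ᵥ
              (((1 : ℝ) / 4) • Matrix.diagonal ![(0 : ℝ), 2, 2, 1, 1]).mulVec
                ![0, 0, 1 / Real.sqrt 2, 1 / Real.sqrt 2, 0])
        = 5 / 8
    ∧ (∀ w : Fin 5 → ℝ, w ⬝ᵥ w = 1 →
        (![1 / Real.sqrt 3, 1 / Real.sqrt 3, 1 / Real.sqrt 3, 0, 0] : Fin 5 → ℝ) ⬝ᵥ w = 0 →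
        min (min
            ((![1 / Real.sqrt 3, 1 / Real.sqrt 3, 1 / Real.sqrt 3, 0, 0] : Fin 5 → ℝ) ⬝ᵥ
                (((1 : ℝ) / 4) • Matrix.diagonal ![(2 : ℝ), 2, 0, 1, 1]).mulVec
                  ![1 / Real.sqrt 3, 1 / Real.sqrt 3, 1 / Real.sqrt 3, 0, 0]
              + w ⬝ᵥ (((1 : ℝ) / 4) • Matrix.diagonal ![(2 : ℝ), 2, 0, 1, 1]).mulVec w)
            ((![1 / Real.sqrt 3, 1 / Real.sqrt 3, 1 / Real.sqrt 3, 0, 0] : Fin 5 → ℝ) ⬝ᵥ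
                (((1 : ℝ) / 4) • Matrix.diagonal ![(2 : ℝ), 0, 2, 1, 1]).mulVec
                  ![1 / Real.sqrt 3, 1 / Real.sqrt 3, 1 / Real.sqrt 3, 0, 0]
              + w ⬝ᵥ (((1 : ℝ) / 4) • Matrix.diagonal ![(2 : ℝ), 0, 2, 1, 1]).mulVec w))
            ((![1 / Real.sqrt 3, 1 / Real.sqrt 3, 1 / Real.sqrt 3, 0, 0] : Fin 5 → ℝ) ⬝ᵥ
                (((1 : ℝ) / 4) • Matrix.diagonal ![(0 : ℝ), 2, 2, 1, 1]).mulVec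
                  ![1 / Real.sqrt 3, 1 / Real.sqrt 3, 1 / Real.sqrt 3, 0, 0]
              + w ⬝ᵥ (((1 : ℝ) / 4) • Matrix.diagonal ![(0 : ℝ), 2, 2, 1, 1]).mulVec w)
          ≤ 7 / 12)
    ∧ (7 / 12 : ℝ) < 5 / 8 := by
  simp only [dotProduct_smul_diagonal_mulVec_self]
  simp only [dotProduct, Fin.sum_univ_five, cons_val_zero, cons_val_one, cons_val, one_div,
    mul_zero, add_zero, zero_add, zero_mul, inv_pow, Nat.ofNat_nonneg, Real.sq_sqrt, ne_eq,
    OfNat.ofNat_ne_zero, not_false_eq_true, mul_inv_cancel₀, zero_pow, one_mul, mul_one,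
    inf_le_right, inf_of_le_left, inf_le_iff, true_and, and_self_left]
  have hinv_sqrt_two : (√2)⁻¹ * (√2)⁻¹ = (2 : ℝ)⁻¹ := by rw [← mul_inv, Real.mul_self_sqrt zero_le_two]
  refine ⟨by rw [hinv_sqrt_two]; norm_num, by norm_num, fun w hw ho => ?_, by norm_num⟩
  have hsum : w 0 + w 1 + w 2 = 0 := by simpa [← mul_add] using ho
  rcases sq_add_sq_add_sq_le_two_mul_sq_of_add_eq_zero hsum with h | h | h
  · right; linarith
  · left; right; linarith
  · left; left; linarith
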